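/- The hyperbolic distance from the horospherical projection to the origin equals the absolute value of the Busemann function: for x ∈ L^d and unit tangent vector v at x⁰, d_L(P̃^v(x), x⁰) = |B_v(x)|, where B_v(x) = log(−⟨x, x⁰+v⟩_L). -/

import Mathlib

open MeasureTheory

noncomputable def arcosh (x : ℝ) : ℝ := Real.log (x + Real.sqrt (x^2 - 1))

noncomputable def mink (d : ℕ) (x y : Fin (d+1) → ℝ) : ℝ :=
  -(x 0 * y 0) + ∑ i : Fin d, x i.succ * y i.succ

def LorentzSet (d : ℕ) : Set (Fin (d+1) → ℝ) :=
  {x | mink d x x = -1 ∧ 0 < x 0}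

noncomputable def dL (d : ℕ) (x y : Fin (d+1) → ℝ) : ℝ :=
  arcosh (-(mink d x y))

noncomputable def lorOrigin (d : ℕ) : Fin (d+1) → ℝ := fun i => if i = 0 then 1 else 0

/-- Horospherical projection in the Lorentz model. -/
noncomputable def PtL (d : ℕ) (v y : Fin (d+1) → ℝ) : Fin (d+1) → ℝ := fun i =>
  -(1 / (2 * mink d y (fun j => lorOrigin d j + v j))) *
    ((1 + (mink d y (fun j => lorOrigin d j + v j))^2) * lorOrigin d i +
      (1 - (mink d y (fun j => lorOrigin d j + v j))^2) * v i)

/-- The Busemann function in the Lorentz model. -/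
noncomputable def BL (d : ℕ) (v x : Fin (d+1) → ℝ) : ℝ :=
  Real.log (-(mink d x (fun i => lorOrigin d i + v i)))

lemma arcosh_aux (t : ℝ) (ht : 0 < t) : arcosh ((1+t^2)/(2*t)) = |Real.log t| := by
  unfold arcosh
  have h2t : (0:ℝ) < 2*t := by linarith
  have hsq : ((1+t^2)/(2*t))^2 - 1 = ((1-t^2)/(2*t))^2 := by
    field_simp; ring
  rw [hsq, Real.sqrt_sq_eq_abs, abs_div, abs_of_pos h2t]
  rcases le_or_gt 1 t with h|h
  · have h1 : |1 - t^2| = t^2 - 1 := by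
      rw [abs_of_nonpos (by nlinarith)]; ring
    rw [h1]
    have h2 : (1+t^2)/(2*t) + (t^2-1)/(2*t) = t := by field_simp; ring
    rw [h2, abs_of_nonneg (Real.log_nonneg h)]
  · have h1 : |1 - t^2| = 1 - t^2 := abs_of_nonneg (by nlinarith)
    rw [h1]
    have h2 : (1+t^2)/(2*t) + (1-t^2)/(2*t) = 1/t := by
      rw [← add_div]
      rw [show (1+t^2)+(1-t^2) = 2 by ring]
      rw [div_eq_div_iff h2t.ne' ht.ne']
      ring
    rw [h2, one_div, Real.log_inv, abs_of_neg (Real.log_neg ht h)]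

/-- the hyperbolic distance from the horospherical projection to the
origin equals the absolute value of the Busemann function. -/
theorem dist_horospherical_projection_origin (d : ℕ) (v : Fin (d+1) → ℝ)
    (hv0 : v 0 = 0) (hv : mink d v v = 1)
    (x : Fin (d+1) → ℝ) (hx : x ∈ LorentzSet d) :
    dL d (PtL d v x) (lorOrigin d) = |BL d v x| := by
  obtain ⟨hxx, hx0⟩ := hx
  set c := mink d x (fun j => lorOrigin d j + v j) with hc
  have hcval : c = -(x 0) + ∑ i : Fin d, x i.succ * v i.succ := by
    rw [hc]; unfold mink lorOrigin
    simp [Fin.succ_ne_zero, hv0]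
  have hxxval : -(x 0 * x 0) + ∑ i : Fin d, x i.succ * x i.succ = -1 := hxx
  have hvval : ∑ i : Fin d, v i.succ * v i.succ = 1 := by
    have h := hv; unfold mink at h; simpa [hv0] using h
  have hCS : (∑ i : Fin d, x i.succ * v i.succ)^2 ≤
      (∑ i : Fin d, x i.succ * x i.succ) * (∑ i : Fin d, v i.succ * v i.succ) := by
    simpa [sq] using Finset.sum_mul_sq_le_sq_mul_sq Finset.univ
      (fun i : Fin d => x i.succ) (fun i : Fin d => v i.succ)
  have hcneg : c < 0 := by
    rw [hcval]
    nlinarith [sq_nonneg (∑ i : Fin d, x i.succ * v i.succ)]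
  have hO0 : lorOrigin d 0 = 1 := rfl
  have hOs : ∀ i : Fin d, lorOrigin d i.succ = 0 := fun i => by
    simp [lorOrigin, Fin.succ_ne_zero]
  have hP1 : mink d (PtL d v x) (lorOrigin d) = -(PtL d v x 0) := by
    unfold mink; simp [hO0, hOs]
  have hP2 : PtL d v x 0 = -(1/(2*c)) * (1 + c^2) := by
    show -(1 / (2 * c)) * ((1 + c^2) * lorOrigin d 0 + (1 - c^2) * v 0) = _
    rw [hO0, hv0]; ring
  have hP : mink d (PtL d v x) (lorOrigin d) = (1 + c^2) / (2*c) := by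
    rw [hP1, hP2]; ring
  rw [dL, hP, BL, ← hc]
  have h1 : -((1 + c^2) / (2*c)) = (1 + (-c)^2) / (2 * (-c)) := by
    rw [neg_sq, show (2 * -c) = -(2*c) by ring, div_neg]
  rw [h1, arcosh_aux (-c) (by linarith)]
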